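/- Let X be a linearly ordered set and let G : X² → X be quasitrivial, symmetric, and nondecreasing. Then the n-ary operation F(x_1,...,x_n) = G(min_i x_i, max_i x_i) is derived from G, i.e., F(x_1,...,x_n) = G(G(...G(G(x_1,x_2),x_3)...),x_n) for all x_1,...,x_n. -/

import Mathlib

/-- `F` is quasitrivial: it always outputs one of its arguments. -/
def Quasitrivial {X : Type*} {n : ℕ} (F : (Fin n → X) → X) : Prop :=
  ∀ x : Fin n → X, ∃ i, F x = x i

/-- `F` is symmetric: invariant under permutation of its arguments. -/
def Symm {X : Type*} {n : ℕ} (F : (Fin n → X) → X) : Prop :=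
  ∀ (x : Fin n → X) (σ : Equiv.Perm (Fin n)), F (x ∘ σ) = F x

/-- `F` is nondecreasing in each argument. -/
def Nondecr {X : Type*} [LinearOrder X] {n : ℕ} (F : (Fin n → X) → X) : Prop :=
  ∀ x y : Fin n → X, (∀ i, x i ≤ y i) → F x ≤ F y

/-- `x` is an isolated point for `F`. -/
def Isolated {X : Type*} {n : ℕ} (F : (Fin n → X) → X) (x : Fin n → X) : Prop :=
  ∀ y : Fin n → X, F y = F x → y = x

/-- `e` is a neutral element of the `n`-ary operation `F`. -/
def Neutral {X : Type*} {n : ℕ} (F : (Fin n → X) → X) (e : X) : Prop :=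
  ∀ (i : Fin n) (x : X), F (Function.update (fun _ => e) i x) = x

/-- `n`-ary associativity: substituting `F` over the block of `n` consecutive
arguments starting at position `i` (0-based) of a `(2n-1)`-tuple gives the same
result as substituting over the block starting at position `i+1`. -/
def NAssoc {X : Type*} (n : ℕ) (F : (Fin n → X) → X) : Prop :=
  ∀ (x : ℕ → X) (i : ℕ), i + 2 ≤ n →
    F (fun j : Fin n => if (j : ℕ) < i then x j
        else if (j : ℕ) = i then F (fun k : Fin n => x (i + k)) else x (j + n - 1))
    = F (fun j : Fin n => if (j : ℕ) < i + 1 then x j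
        else if (j : ℕ) = i + 1 then F (fun k : Fin n => x (i + 1 + k)) else x (j + n - 1))

/-- `F` is bisymmetric. -/
def Bisymm {X : Type*} {n : ℕ} (F : (Fin n → X) → X) : Prop :=
  ∀ M : Fin n → Fin n → X,
    F (fun i => F (M i)) = F (fun j => F (fun i => M i j))

/-- `F` is ultrabisymmetric: the value `F (F ∘ rows)` is unchanged when two
entries of the matrix are exchanged. -/
def UltraBisymm {X : Type*} {n : ℕ} (F : (Fin n → X) → X) : Prop :=
  ∀ (M : Fin n → Fin n → X) (p q : Fin n × Fin n),
    F (fun i => F (M i)) =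
    F (fun i => F (fun j =>
      if (i, j) = p then M q.1 q.2 else if (i, j) = q then M p.1 p.2 else M i j))

/-- Iterated left composition `x 0 ∘ x 1 ∘ ⋯ ∘ x k` for a binary operation. -/
def iterComp {X : Type*} (H : X → X → X) (x : ℕ → X) : ℕ → X
  | 0 => x 0
  | k + 1 => H (iterComp H x k) (x (k + 1))

/-- The `n`-ary operation `F` is derived from the binary operation `H`. -/
def DerivedFrom {X : Type*} {n : ℕ} (F : (Fin n → X) → X) (H : X → X → X) : Prop :=
  ∀ x : ℕ → X, F (fun i : Fin n => x i) = iterComp H x (n - 1)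

/-! The key identity is `G (G a b) c = G (min a c) (max b c)` for `a ≤ b`, checked by locating `c`
relative to `a ≤ b`. Quasitriviality and monotonicity make `G` constant on a segment between its
two arguments (`G a b = a` and `a ≤ c ≤ b` force `G a c = a`), and reversing the order exchanges
the cases `c ≤ a` and `b ≤ c`. Induction on the number of arguments then shows that the iterated
composition only sees the minimum and the maximum. -/

namespace Finset

theorem inf'_range_succ {α : Type*} [SemilatticeInf α] (x : ℕ → α) (k : ℕ) :
    (range (k + 2)).inf' nonempty_range_add_one x
      = (range (k + 1)).inf' nonempty_range_add_one x ⊓ x (k + 1) := by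
  rw [inf'_congr _ range_add_one fun _ _ => rfl, inf'_insert, inf_comm]

theorem sup'_range_succ {α : Type*} [SemilatticeSup α] (x : ℕ → α) (k : ℕ) :
    (range (k + 2)).sup' nonempty_range_add_one x
      = (range (k + 1)).sup' nonempty_range_add_one x ⊔ x (k + 1) := by
  rw [sup'_congr _ range_add_one fun _ _ => rfl, sup'_insert, sup_comm]

theorem univ_inf'_fin_eq_range {α : Type*} [SemilatticeInf α] {n : ℕ} (x : ℕ → α)
    (h : (univ : Finset (Fin n)).Nonempty) :
    univ.inf' h (fun i : Fin n => x i)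
      = (range n).inf' (let ⟨i, _⟩ := h; ⟨i, mem_range.2 i.isLt⟩) x :=
  (inf'_comp_eq_map x h (f := Fin.valEmbedding)).trans <|
    inf'_congr _ (by rw [Fin.map_valEmbedding_univ, Nat.Iio_eq_range]) fun _ _ => rfl

theorem univ_sup'_fin_eq_range {α : Type*} [SemilatticeSup α] {n : ℕ} (x : ℕ → α)
    (h : (univ : Finset (Fin n)).Nonempty) :
    univ.sup' h (fun i : Fin n => x i)
      = (range n).sup' (let ⟨i, _⟩ := h; ⟨i, mem_range.2 i.isLt⟩) x :=
  (sup'_comp_eq_map x h (f := Fin.valEmbedding)).trans <|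
    sup'_congr _ (by rw [Fin.map_valEmbedding_univ, Nat.Iio_eq_range]) fun _ _ => rfl

end Finset

structure IsQuasitrivialCommMonotone {X : Type*} [LE X] (G : X → X → X) : Prop where
  eq_or_eq : ∀ x y, G x y = x ∨ G x y = y
  comm : ∀ x y, G x y = G y x
  mono : ∀ x x' y y', x ≤ x' → y ≤ y' → G x y ≤ G x' y'

namespace IsQuasitrivialCommMonotone

variable {X : Type*} [LinearOrder X] {G : X → X → X} (hG : IsQuasitrivialCommMonotone G)
include hG

theorem dual : IsQuasitrivialCommMonotone (X := Xᵒᵈ) G where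
  eq_or_eq := hG.eq_or_eq
  comm := hG.comm
  mono _ _ _ _ hx hy := hG.mono _ _ _ _ hx hy

theorem idem (a : X) : G a a = a := (hG.eq_or_eq a a).elim id id

theorem eq_left_of_le_of_le {a b c : X} (h : G a b = a) (hac : a ≤ c) (hcb : c ≤ b) :
    G a c = a :=
  le_antisymm ((hG.mono _ _ _ _ le_rfl hcb).trans_eq h)
    ((hG.idem a).symm.trans_le (hG.mono _ _ _ _ le_rfl hac))

theorem eq_right_of_le_of_le {a b c : X} (h : G a b = b) (hac : a ≤ c) (hcb : c ≤ b) :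
    G c b = b := by
  rw [hG.comm] at h ⊢
  exact hG.dual.eq_left_of_le_of_le h hcb hac

theorem apply_apply_of_le_left {a b c : X} (hab : a ≤ b) (hca : c ≤ a) :
    G (G a b) c = G c b := by
  rcases hG.eq_or_eq a b with h | h
  · rcases hG.eq_or_eq c b with h' | h'
    · rw [h, hG.comm, hG.eq_left_of_le_of_le h' hca hab, h']
    · obtain rfl : a = b := h ▸ hG.eq_right_of_le_of_le h' hca hab
      rw [h, hG.comm]
  · rw [h, hG.comm]

theorem apply_apply_of_le_right {a b c : X} (hab : a ≤ b) (hbc : b ≤ c) :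
    G (G a b) c = G a c := by
  rw [hG.comm a b, hG.comm a c]
  exact hG.dual.apply_apply_of_le_left (X := Xᵒᵈ) hab hbc

theorem apply_apply_of_le_of_le {a b c : X} (hac : a ≤ c) (hcb : c ≤ b) :
    G (G a b) c = G a b := by
  rcases hG.eq_or_eq a b with h | h
  · rw [h, hG.eq_left_of_le_of_le h hac hcb]
  · rw [h, hG.comm, hG.eq_right_of_le_of_le h hac hcb]

theorem apply_apply_eq_min_max {a b c : X} (hab : a ≤ b) :
    G (G a b) c = G (min a c) (max b c) := by
  rcases le_total c a with hca | hac
  · rw [hG.apply_apply_of_le_left hab hca, min_eq_right hca, max_eq_left (hca.trans hab)]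
  rcases le_total c b with hcb | hbc
  · rw [hG.apply_apply_of_le_of_le hac hcb, min_eq_left hac, max_eq_left hcb]
  · rw [hG.apply_apply_of_le_right hab hbc, min_eq_left hac, max_eq_right hbc]

theorem iterComp_eq (x : ℕ → X) (k : ℕ) :
    iterComp G x k = G ((Finset.range (k + 1)).inf' Finset.nonempty_range_add_one x)
      ((Finset.range (k + 1)).sup' Finset.nonempty_range_add_one x) := by
  induction k with
  | zero => simp [iterComp, hG.idem]
  | succ k ih =>
    have hk := Finset.self_mem_range_succ k
    rw [iterComp, ih, hG.apply_apply_eq_min_max ((Finset.inf'_le x hk).trans (Finset.le_sup' x hk)),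
      Finset.inf'_range_succ, Finset.sup'_range_succ]

end IsQuasitrivialCommMonotone

theorem stmt_8 {X : Type*} [LinearOrder X] {n : ℕ} (hn : 2 ≤ n)
    (G : X → X → X)
    (hq : ∀ x y, G x y = x ∨ G x y = y)
    (hs : ∀ x y, G x y = G y x)
    (hm : ∀ x x' y y', x ≤ x' → y ≤ y' → G x y ≤ G x' y') :
    DerivedFrom (fun x : Fin n → X =>
      G (Finset.univ.inf' (Finset.univ_nonempty_iff.mpr ⟨⟨0, by omega⟩⟩) x)
        (Finset.univ.sup' (Finset.univ_nonempty_iff.mpr ⟨⟨0, by omega⟩⟩) x)) G := by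
  intro x
  obtain ⟨m, rfl⟩ : ∃ m, n = m + 1 := ⟨n - 1, by omega⟩
  dsimp only
  rw [Finset.univ_inf'_fin_eq_range, Finset.univ_sup'_fin_eq_range, Nat.add_sub_cancel,
    IsQuasitrivialCommMonotone.iterComp_eq ⟨hq, hs, hm⟩]
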